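/- Let U ⊆ A^{ℤ²} be an additive shift space that is block gluing, and let Ω = {Ω(n)}_{n≥1} be an expanding system of finite subsets of ℤ². If limsup_{n→∞} |∂Ω(n)|/|Ω(n)| = 0, then h_Ω(U) = h_r(U). -/

import Mathlib

open Filter
open scoped Classical

/-- The `m × n` rectangular lattice `Z_{m×n}(p)` with bottom-left corner `p`. -/
def Zrect (m n : ℕ) (p : ℤ × ℤ) : Finset (ℤ × ℤ) :=
  (Finset.range m ×ˢ Finset.range n).image (fun ab => (p.1 + (ab.1 : ℤ), p.2 + (ab.2 : ℤ)))

/-- The number of patterns of `U` seen on the finite window `L`. -/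
noncomputable def patternCount {A : Type*} (U : Set ((ℤ × ℤ) → A)) (L : Finset (ℤ × ℤ)) : ℕ :=
  Set.ncard ((fun x => fun p : L => x (p : ℤ × ℤ)) '' U)

/-- An additive shift space: nonempty, closed, translation invariant. -/
def IsShiftSpace {A : Type*} [TopologicalSpace A] (U : Set ((ℤ × ℤ) → A)) : Prop :=
  U.Nonempty ∧ IsClosed U ∧ ∀ v : ℤ × ℤ, ∀ x ∈ U, (fun p => x (p + v)) ∈ U

/-- An expanding system of finite sublattices of `ℤ²`. -/
def IsExpandingSystem (Ω : ℕ → Finset (ℤ × ℤ)) : Prop :=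
  (∀ n, Ω n ⊂ Ω (n + 1)) ∧ ∀ p : ℤ × ℤ, ∃ n, p ∈ Ω n

/-- The interior of a finite lattice. -/
def latInterior (L : Finset (ℤ × ℤ)) : Finset (ℤ × ℤ) :=
  L.filter (fun p => (p.1 + 1, p.2) ∈ L ∧ (p.1, p.2 + 1) ∈ L ∧ (p.1 + 1, p.2 + 1) ∈ L)

/-- The boundary of a finite lattice. -/
def latBoundary (L : Finset (ℤ × ℤ)) : Finset (ℤ × ℤ) := L \ latInterior L

/-- The rectangular entropy `h_r(U)`. -/
noncomputable def rectEntropy {A : Type*} (U : Set ((ℤ × ℤ) → A)) : ℝ :=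
  ⨅ mn : ℕ × ℕ, (1 / (((mn.1 + 1) * (mn.2 + 1) : ℕ) : ℝ)) *
    Real.log (patternCount U (Zrect (mn.1 + 1) (mn.2 + 1) (0, 0)))

/-- The entropy `h_Ω(U)` along an expanding system `Ω`. -/
noncomputable def entropyAlong {A : Type*} (U : Set ((ℤ × ℤ) → A)) (Ω : ℕ → Finset (ℤ × ℤ)) : ℝ :=
  Filter.limsup (fun n => (1 / ((Ω n).card : ℝ)) * Real.log (patternCount U (Ω n))) Filter.atTop

/-- `Ω_{k,l}(n)`: the union of grid rectangles `Z_{k×l}((ak,bl))` contained in `L`. -/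
noncomputable def gridPart (k l : ℕ) (L : Finset (ℤ × ℤ)) : Finset (ℤ × ℤ) :=
  L.filter (fun p => ∃ a b : ℤ,
    p ∈ Zrect k l ((k : ℤ) * a, (l : ℤ) * b) ∧ Zrect k l ((k : ℤ) * a, (l : ℤ) * b) ⊆ L)

/-- `β_{k,l}` : the size of the complement of the grid part. -/
noncomputable def betaKL (k l : ℕ) (L : Finset (ℤ × ℤ)) : ℕ := (L \ gridPart k l L).card

/-- `α_{k,l}` : the number of grid rectangles contained in `L`. -/
noncomputable def alphaKL (k l : ℕ) (L : Finset (ℤ × ℤ)) : ℕ :=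
  Set.ncard {ab : ℤ × ℤ | Zrect k l ((k : ℤ) * ab.1, (l : ℤ) * ab.2) ⊆ L}

/-- A tessellation of `ℤ²`. -/
def IsTessellation (T : Finset (ℤ × ℤ)) : Prop :=
  ∃ v : ℕ → ℤ × ℤ,
    (∀ i j : ℕ, i ≠ j → Disjoint (T.image (· + v i)) (T.image (· + v j))) ∧
    ∀ p : ℤ × ℤ, ∃ i : ℕ, p ∈ T.image (· + v i)

/-- Euclidean distance between points of `ℤ²`. -/
noncomputable def euclDist (p q : ℤ × ℤ) : ℝ :=
  Real.sqrt (((p.1 - q.1 : ℤ) : ℝ) ^ 2 + ((p.2 - q.2 : ℤ) : ℝ) ^ 2)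

/-- Block gluing with gap `M`. -/
def BlockGluingWithGap {A : Type*} (U : Set ((ℤ × ℤ) → A)) (M : ℕ) : Prop :=
  ∀ (m₁ n₁ m₂ n₂ : ℕ) (c₁ c₂ : ℤ × ℤ),
    (∀ p ∈ Zrect m₁ n₁ c₁, ∀ q ∈ Zrect m₂ n₂ c₂, (M : ℝ) ≤ euclDist p q) →
    ∀ x₁ ∈ U, ∀ x₂ ∈ U, ∃ x ∈ U,
      (∀ p ∈ Zrect m₁ n₁ c₁, x p = x₁ p) ∧ ∀ q ∈ Zrect m₂ n₂ c₂, x q = x₂ q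

/-- Block gluing. -/
def IsBlockGluing {A : Type*} (U : Set ((ℤ × ℤ) → A)) : Prop :=
  ∃ M : ℕ, 1 ≤ M ∧ BlockGluingWithGap U M

/-- A full shift on a sub-alphabet. -/
def IsFullShift {A : Type*} (U : Set ((ℤ × ℤ) → A)) : Prop :=
  ∃ B : Set A, U = {x | ∀ p : ℤ × ℤ, x p ∈ B}

/-- Shift of finite type. -/
def IsSFT {A : Type*} (U : Set ((ℤ × ℤ) → A)) : Prop :=
  ∃ (F : Finset (ℤ × ℤ)) (P : Set (F → A)),
    U = {x | ∀ v : ℤ × ℤ, (fun p : F => x (v + (p : ℤ × ℤ))) ∈ P}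

/-- `(i,j)` has horizontal length `m` in `L`. -/
def HasHorizLength (L : Finset (ℤ × ℤ)) (p : ℤ × ℤ) (m : ℕ) : Prop :=
  1 ≤ m ∧ (∃ c : ℤ × ℤ, p ∈ Zrect m 1 c ∧ Zrect m 1 c ⊆ L) ∧
    ∀ m' : ℕ, m < m' → ¬ ∃ c : ℤ × ℤ, p ∈ Zrect m' 1 c ∧ Zrect m' 1 c ⊆ L

/-- `(i,j)` has vertical length `m` in `L`. -/
def HasVertLength (L : Finset (ℤ × ℤ)) (p : ℤ × ℤ) (m : ℕ) : Prop :=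
  1 ≤ m ∧ (∃ c : ℤ × ℤ, p ∈ Zrect 1 m c ∧ Zrect 1 m c ⊆ L) ∧
    ∀ m' : ℕ, m < m' → ¬ ∃ c : ℤ × ℤ, p ∈ Zrect 1 m' c ∧ Zrect 1 m' c ⊆ L

noncomputable def betaHoriz (m : ℕ) (L : Finset (ℤ × ℤ)) : ℕ :=
  (L.filter (fun p => HasHorizLength L p m)).card

noncomputable def betaVert (m : ℕ) (L : Finset (ℤ × ℤ)) : ℕ :=
  (L.filter (fun p => HasVertLength L p m)).card

/-- The one-dimensional sublattice segment `{s • v : 0 ≤ s ≤ n-1}`. -/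
def lineSegment (v : ℤ × ℤ) (n : ℕ) : Finset (ℤ × ℤ) :=
  (Finset.range n).image (fun s : ℕ => ((s : ℤ) * v.1, (s : ℤ) * v.2))

/-- The projectional entropy along the one-dimensional sublattice generated by `v`. -/
noncomputable def projEntropy {A : Type*} (U : Set ((ℤ × ℤ) → A)) (v : ℤ × ℤ) : ℝ :=
  ⨅ n : ℕ, (1 / (n + 1 : ℝ)) * Real.log (patternCount U (lineSegment v (n + 1)))

/-- `ĥ⁽¹⁾(U)`: supremum of projectional entropies over one-dimensional sublattices. -/
noncomputable def hHatOne {A : Type*} (U : Set ((ℤ × ℤ) → A)) : ℝ :=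
  ⨆ v : {w : ℤ × ℤ // w ≠ 0}, projEntropy U (v : ℤ × ℤ)

/-- The horizontal golden-mean shift. -/
def goldenMeanShift : Set ((ℤ × ℤ) → Fin 2) :=
  {x | ∀ p : ℤ × ℤ, x p * x (p.1 + 1, p.2) = 0}

/-- The sequence `a_k`: `a_1 = 2`, `a_2 = 3`, `a_k = a_{k-1} + a_{k-2}`. -/
def aSeq : ℕ → ℕ
  | 0 => 1
  | 1 => 2
  | (k + 2) => aSeq (k + 1) + aSeq k


/-
Cut `Ω(n)` along the `k × l` grid. The `α` grid cells inside `Ω(n)` carry at most `Γ_{k×l}`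
patterns each and the `β` remaining sites at most `N` symbols each. A cell meeting both `Ω(n)` and
its complement contains a point of `∂Ω(n)` or a point outside `Ω(n)` whose right or upper
neighbour lies in `Ω(n)`; there are at most `3 |∂Ω(n)|` such points, so `β ≤ 3kl |∂Ω(n)|` is
negligible and `h_Ω ≤ (1 / kl) log Γ_{k×l}` for all `k, l`.

Conversely, if `M` is a gluing gap, the `k × k` squares in the corners of the `(k + M) × (k + M)`
cells inside `Ω(n)` are `M` apart, so block gluing lets their patterns be chosen independently:
`h_Ω ≥ log Γ_{k×k} / (k + M)² ≥ (k / (k + M))² h_r`, and `k → ∞`.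
-/

lemma mem_Zrect {m n : ℕ} {c p : ℤ × ℤ} :
    p ∈ Zrect m n c ↔ c.1 ≤ p.1 ∧ p.1 < c.1 + m ∧ c.2 ≤ p.2 ∧ p.2 < c.2 + n := by
  simp only [Zrect, Finset.mem_image, Finset.mem_product, Finset.mem_range, Prod.ext_iff]
  constructor
  · rintro ⟨⟨a, b⟩, ⟨ha, hb⟩, h₁, h₂⟩
    dsimp only at *
    omega
  · rintro ⟨h₁, h₂, h₃, h₄⟩
    exact ⟨((p.1 - c.1).toNat, (p.2 - c.2).toNat), ⟨by omega, by omega⟩, by omega, by omega⟩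

lemma card_Zrect (m n : ℕ) (c : ℤ × ℤ) : (Zrect m n c).card = m * n := by
  rw [Zrect, Finset.card_image_of_injective, Finset.card_product, Finset.card_range,
    Finset.card_range]
  rintro ⟨a, b⟩ ⟨a', b'⟩ h
  simp only [Prod.mk.injEq] at h ⊢
  omega

lemma Zrect_eq_image_add (m n : ℕ) (c : ℤ × ℤ) :
    Zrect m n c = (Zrect m n (0, 0)).image (· + c) := by
  ext p
  simp only [Finset.mem_image, mem_Zrect]
  constructor
  · intro hp
    exact ⟨p - c, by simp only [Prod.fst_sub, Prod.snd_sub]; omega, sub_add_cancel p c⟩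
  · rintro ⟨q, hq, rfl⟩
    simp only [Prod.fst_add, Prod.snd_add]
    omega

section PatternCount

variable {A : Type*} (U : Set ((ℤ × ℤ) → A))

def restrictTo (L : Finset (ℤ × ℤ)) (x : (ℤ × ℤ) → A) : L → A := fun p => x p

lemma patternCount_eq (L : Finset (ℤ × ℤ)) : patternCount U L = (restrictTo L '' U).ncard := rfl

lemma patternCount_union_eq (L L' : Finset (ℤ × ℤ)) :
    patternCount U (L ∪ L') = ((fun x => (restrictTo L x, restrictTo L' x)) '' U).ncard := by
  set f : (↥(L ∪ L') → A) → (L → A) × (L' → A) := fun g =>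
    (fun p => g ⟨p, Finset.mem_union_left _ p.2⟩, fun p => g ⟨p, Finset.mem_union_right _ p.2⟩)
  have hf : Function.Injective f := by
    intro g g' h
    funext ⟨p, hp⟩
    rcases Finset.mem_union.1 hp with hp | hp
    · exact congrFun (congrArg Prod.fst h) ⟨p, hp⟩
    · exact congrFun (congrArg Prod.snd h) ⟨p, hp⟩
  rw [patternCount_eq, ← Set.ncard_image_of_injective _ hf, Set.image_image]
  rfl

lemma ncard_prod_image_restrictTo (L L' : Finset (ℤ × ℤ)) :
    ((restrictTo L '' U) ×ˢ (restrictTo L' '' U)).ncard = patternCount U L * patternCount U L' := by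
  rw [patternCount_eq, patternCount_eq, Set.ncard_prod]

variable [Fintype A]

lemma patternCount_pos (hne : U.Nonempty) (L : Finset (ℤ × ℤ)) : 0 < patternCount U L :=
  (Set.ncard_pos (Set.toFinite _)).2 (hne.image _)

lemma patternCount_le_card_pow (L : Finset (ℤ × ℤ)) :
    patternCount U L ≤ Fintype.card A ^ L.card := by
  calc patternCount U L ≤ (Set.univ : Set (L → A)).ncard :=
        Set.ncard_le_ncard (Set.subset_univ _)
    _ = Fintype.card A ^ L.card := by simp [Set.ncard_univ, Nat.card_eq_fintype_card]

lemma patternCount_mono {L L' : Finset (ℤ × ℤ)} (h : L ⊆ L') :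
    patternCount U L ≤ patternCount U L' := by
  have : restrictTo L '' U = (fun g p => g ⟨p.1, h p.2⟩) '' (restrictTo L' '' U) := by
    rw [Set.image_image]; rfl
  rw [patternCount_eq, patternCount_eq, this]
  exact Set.ncard_image_le (Set.toFinite _)

lemma patternCount_union_le (L L' : Finset (ℤ × ℤ)) :
    patternCount U (L ∪ L') ≤ patternCount U L * patternCount U L' := by
  rw [patternCount_union_eq, ← ncard_prod_image_restrictTo]
  refine Set.ncard_le_ncard ?_ (Set.toFinite _)
  rintro - ⟨x, hx, rfl⟩
  exact ⟨⟨x, hx, rfl⟩, ⟨x, hx, rfl⟩⟩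

lemma mul_patternCount_le_union {L L' : Finset (ℤ × ℤ)}
    (hglue : ∀ x ∈ U, ∀ x' ∈ U, ∃ y ∈ U, (∀ p ∈ L, y p = x p) ∧ ∀ p ∈ L', y p = x' p) :
    patternCount U L * patternCount U L' ≤ patternCount U (L ∪ L') := by
  rw [patternCount_union_eq, ← ncard_prod_image_restrictTo]
  refine Set.ncard_le_ncard ?_ (Set.toFinite _)
  rintro ⟨-, -⟩ ⟨⟨x, hx, rfl⟩, ⟨x', hx', rfl⟩⟩
  obtain ⟨y, hy, hyx, hyx'⟩ := hglue x hx x' hx'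
  refine ⟨y, hy, ?_⟩
  simp only [Prod.mk.injEq]
  exact ⟨funext fun p => hyx p p.2, funext fun p => hyx' p p.2⟩

lemma patternCount_biUnion_le {ι : Type*} [DecidableEq ι] (s : Finset ι)
    (F : ι → Finset (ℤ × ℤ)) :
    patternCount U (s.biUnion F) ≤ ∏ i ∈ s, patternCount U (F i) := by
  induction s using Finset.induction with
  | empty => simpa using patternCount_le_card_pow U ∅
  | insert a s ha ih =>
    rw [Finset.biUnion_insert, Finset.prod_insert ha]
    exact (patternCount_union_le U _ _).trans (Nat.mul_le_mul_left _ ih)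

end PatternCount

section Translation

variable {A : Type*} {U : Set ((ℤ × ℤ) → A)}

def IsTranslationInvariant (U : Set ((ℤ × ℤ) → A)) : Prop :=
  ∀ v : ℤ × ℤ, ∀ x ∈ U, (fun p => x (p + v)) ∈ U

lemma patternCount_image_add (hU : IsTranslationInvariant U)
    (L : Finset (ℤ × ℤ)) (v : ℤ × ℤ) :
    patternCount U (L.image (· + v)) = patternCount U L := by
  set Φ : (↥(L.image (· + v)) → A) → (L → A) := fun g p =>
    g ⟨p + v, Finset.mem_image_of_mem _ p.2⟩
  have hΦ : Function.Injective Φ := by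
    intro g g' h
    funext ⟨q, hq⟩
    obtain ⟨p, hp, rfl⟩ := Finset.mem_image.1 hq
    exact congrFun h ⟨p, hp⟩
  have himage : Φ '' (restrictTo _ '' U) = restrictTo L '' U := by
    ext g
    constructor
    · rintro ⟨-, ⟨x, hx, rfl⟩, rfl⟩
      exact ⟨_, hU v x hx, rfl⟩
    · rintro ⟨x, hx, rfl⟩
      refine ⟨_, ⟨_, hU (-v) x hx, rfl⟩, ?_⟩
      funext p
      simp [Φ, restrictTo]
  rw [patternCount_eq, patternCount_eq, ← himage, Set.ncard_image_of_injective _ hΦ]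

lemma patternCount_Zrect (hU : IsTranslationInvariant U) (m n : ℕ) (c : ℤ × ℤ) :
    patternCount U (Zrect m n c) = patternCount U (Zrect m n (0, 0)) := by
  rw [Zrect_eq_image_add m n c, patternCount_image_add hU]

end Translation

section Grid

def gridIndex (k l : ℕ) (p : ℤ × ℤ) : ℤ × ℤ := (p.1 / k, p.2 / l)

def gridRect (k l : ℕ) (i : ℤ × ℤ) : Finset (ℤ × ℤ) := Zrect k l (k * i.1, l * i.2)

def fullCells (k l : ℕ) (L : Finset (ℤ × ℤ)) : Finset (ℤ × ℤ) :=
  (L.image (gridIndex k l)).filter (gridRect k l · ⊆ L)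

variable {k l : ℕ} {L : Finset (ℤ × ℤ)}

lemma mem_gridRect_iff (hk : 0 < k) (hl : 0 < l) {p i : ℤ × ℤ} :
    p ∈ gridRect k l i ↔ gridIndex k l p = i := by
  rw [gridRect, mem_Zrect, gridIndex, Prod.ext_iff, Int.ediv_eq_iff_of_pos (by omega),
    Int.ediv_eq_iff_of_pos (by omega), mul_comm i.1, mul_comm i.2]
  exact and_assoc.symm

lemma mem_gridRect_gridIndex (hk : 0 < k) (hl : 0 < l) (p : ℤ × ℤ) :
    p ∈ gridRect k l (gridIndex k l p) :=
  (mem_gridRect_iff hk hl).2 rfl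

lemma card_gridRect (k l : ℕ) (i : ℤ × ℤ) : (gridRect k l i).card = k * l := card_Zrect _ _ _

lemma pairwiseDisjoint_gridRect (hk : 0 < k) (hl : 0 < l) (s : Set (ℤ × ℤ)) :
    s.PairwiseDisjoint (gridRect k l) := by
  intro i _ j _ hij
  refine Finset.disjoint_left.2 fun p hi hj => hij ?_
  rw [← (mem_gridRect_iff hk hl).1 hi, ← (mem_gridRect_iff hk hl).1 hj]

lemma mem_fullCells (hk : 0 < k) (hl : 0 < l) {i : ℤ × ℤ} :
    i ∈ fullCells k l L ↔ gridRect k l i ⊆ L := by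
  refine ⟨fun h => (Finset.mem_filter.1 h).2, fun h => Finset.mem_filter.2 ⟨?_, h⟩⟩
  obtain ⟨p, hp⟩ : (gridRect k l i).Nonempty := by
    rw [← Finset.card_pos, card_gridRect]
    positivity
  exact Finset.mem_image.2 ⟨p, h hp, (mem_gridRect_iff hk hl).1 hp⟩

lemma alphaKL_eq_card_fullCells (hk : 0 < k) (hl : 0 < l) :
    alphaKL k l L = (fullCells k l L).card := by
  rw [alphaKL, ← Set.ncard_coe_finset]
  congr 1
  ext i
  rw [Finset.mem_coe, mem_fullCells hk hl]
  rfl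

lemma mem_gridPart_iff (hk : 0 < k) (hl : 0 < l) {p : ℤ × ℤ} :
    p ∈ gridPart k l L ↔ p ∈ L ∧ gridRect k l (gridIndex k l p) ⊆ L := by
  refine Finset.mem_filter.trans (and_congr_right fun _ => ⟨?_, fun h => ⟨_, _, ?_, h⟩⟩)
  · rintro ⟨a, b, hp, hL⟩
    rwa [(mem_gridRect_iff hk hl).1 (show p ∈ gridRect k l (a, b) from hp)]
  · exact mem_gridRect_gridIndex hk hl p

lemma gridPart_subset : gridPart k l L ⊆ L := Finset.filter_subset _ _

lemma gridPart_eq_biUnion (hk : 0 < k) (hl : 0 < l) :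
    gridPart k l L = (fullCells k l L).biUnion (gridRect k l) := by
  ext p
  rw [mem_gridPart_iff hk hl, Finset.mem_biUnion]
  constructor
  · rintro ⟨-, hL⟩
    exact ⟨_, (mem_fullCells hk hl).2 hL, mem_gridRect_gridIndex hk hl p⟩
  · rintro ⟨i, hi, hp⟩
    rw [mem_fullCells hk hl] at hi
    rw [(mem_gridRect_iff hk hl).1 hp]
    exact ⟨hi hp, hi⟩

lemma card_eq_alphaKL_mul_add_betaKL (hk : 0 < k) (hl : 0 < l) :
    L.card = alphaKL k l L * (k * l) + betaKL k l L := by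
  have hcard : (gridPart k l L).card = alphaKL k l L * (k * l) := by
    rw [gridPart_eq_biUnion hk hl, Finset.card_biUnion (pairwiseDisjoint_gridRect hk hl _),
      Finset.sum_congr rfl fun i _ => card_gridRect k l i, Finset.sum_const, smul_eq_mul,
      alphaKL_eq_card_fullCells hk hl]
  rw [← hcard, betaKL, add_comm]
  exact (Finset.card_sdiff_add_card_eq_card gridPart_subset).symm

end Grid

section Boundary

variable {L : Finset (ℤ × ℤ)} {e r : ℤ × ℤ}

lemma mem_latBoundary_of_add_notMem (he : e = (1, 0) ∨ e = (0, 1)) (hr : r ∈ L)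
    (hre : r + e ∉ L) : r ∈ latBoundary L := by
  simp only [latBoundary, latInterior, Finset.mem_sdiff, Finset.mem_filter, not_and]
  refine ⟨hr, fun _ h₁ h₂ _ => hre ?_⟩
  rcases he with rfl | rfl
  · rwa [show r + (1, 0) = (r.1 + 1, r.2) from Prod.ext rfl (add_zero _)]
  · rwa [show r + (0, 1) = (r.1, r.2 + 1) from Prod.ext (add_zero _) rfl]

def crossingSet (L : Finset (ℤ × ℤ)) : Finset (ℤ × ℤ) :=
  latBoundary L ∪ (L.image (· - (1, 0)) \ L) ∪ (L.image (· - (0, 1)) \ L)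

/-- Translation preserves `|L|`, so there are as many entries into `L` along `e` as exits. -/
lemma card_image_sub_sdiff_le (he : e = (1, 0) ∨ e = (0, 1)) :
    (L.image (· - e) \ L).card ≤ (latBoundary L).card := by
  rw [Finset.card_sdiff_comm (Finset.card_image_of_injective _ (sub_left_injective))]
  refine Finset.card_le_card fun r hr => ?_
  rw [Finset.mem_sdiff, Finset.mem_image] at hr
  exact mem_latBoundary_of_add_notMem he hr.1 fun h => hr.2 ⟨r + e, h, add_sub_cancel_right r e⟩

lemma card_crossingSet_le (L : Finset (ℤ × ℤ)) :
    (crossingSet L).card ≤ 3 * (latBoundary L).card := by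
  have h₁ := card_image_sub_sdiff_le (L := L) (Or.inl rfl)
  have h₂ := card_image_sub_sdiff_le (L := L) (Or.inr rfl)
  have h₃ := Finset.card_union_le (latBoundary L ∪ (L.image (· - (1, 0)) \ L))
    (L.image (· - (0, 1)) \ L)
  have h₄ := Finset.card_union_le (latBoundary L) (L.image (· - (1, 0)) \ L)
  rw [crossingSet]
  omega

lemma iff_add_of_notMem_crossingSet (he : e = (1, 0) ∨ e = (0, 1)) (hr : r ∉ crossingSet L) :
    r ∈ L ↔ r + e ∈ L := by
  simp only [crossingSet, Finset.mem_union, not_or] at hr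
  refine ⟨fun h => by_contra fun h' => hr.1.1 (mem_latBoundary_of_add_notMem he h h'),
    fun h => by_contra fun h' => ?_⟩
  have hr' : r ∈ L.image (· - e) \ L :=
    Finset.mem_sdiff.2 ⟨Finset.mem_image.2 ⟨r + e, h, add_sub_cancel_right r e⟩, h'⟩
  rcases he with rfl | rfl
  · exact hr.1.2 hr'
  · exact hr.2 hr'

lemma iff_of_forall_lt_iff_succ {P : ℕ → Prop} {n : ℕ} (h : ∀ j < n, P j ↔ P (j + 1)) :
    P 0 ↔ P n := by
  induction n with
  | zero => rfl
  | succ n ih => exact (ih fun j hj => h j (by omega)).trans (h n (by omega))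

lemma corner_mem_iff_of_forall_iff_add {m n : ℕ} {c p : ℤ × ℤ}
    (h : ∀ r ∈ Zrect m n c, (r ∈ L ↔ r + (1, 0) ∈ L) ∧ (r ∈ L ↔ r + (0, 1) ∈ L))
    (hp : p ∈ Zrect m n c) : c ∈ L ↔ p ∈ L := by
  rw [mem_Zrect] at hp
  obtain ⟨a, ha⟩ : ∃ a : ℕ, p.1 = c.1 + a := ⟨(p.1 - c.1).toNat, by omega⟩
  obtain ⟨b, hb⟩ : ∃ b : ℕ, p.2 = c.2 + b := ⟨(p.2 - c.2).toNat, by omega⟩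
  have hcol : c ∈ L ↔ (c.1, c.2 + b) ∈ L := by
    have := iff_of_forall_lt_iff_succ (P := fun j : ℕ => (c.1, c.2 + j) ∈ L) (n := b)
      fun j hj => by
        simpa [add_assoc] using (h (c.1, c.2 + j) (mem_Zrect.2 (by dsimp only; omega))).2
    simpa using this
  have hrow : (c.1, c.2 + b) ∈ L ↔ p ∈ L := by
    rw [show p = (c.1 + a, c.2 + b) from Prod.ext ha hb]
    have := iff_of_forall_lt_iff_succ (P := fun j : ℕ => (c.1 + j, c.2 + b) ∈ L) (n := a)
      fun j hj => by
        simpa [add_assoc] using (h (c.1 + j, c.2 + b) (mem_Zrect.2 (by dsimp only; omega))).1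
    simpa using this
  exact hcol.trans hrow

lemma exists_mem_crossingSet {m n : ℕ} {c p q : ℤ × ℤ} (hp : p ∈ Zrect m n c) (hpL : p ∈ L)
    (hq : q ∈ Zrect m n c) (hqL : q ∉ L) : ∃ r ∈ Zrect m n c, r ∈ crossingSet L := by
  by_contra! h
  have hconst : ∀ r ∈ Zrect m n c, c ∈ L ↔ r ∈ L := fun _ =>
    corner_mem_iff_of_forall_iff_add fun r hr =>
      ⟨iff_add_of_notMem_crossingSet (Or.inl rfl) (h r hr),
        iff_add_of_notMem_crossingSet (Or.inr rfl) (h r hr)⟩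
  exact hqL ((hconst q hq).1 ((hconst p hp).2 hpL))

lemma betaKL_le {k l : ℕ} (hk : 0 < k) (hl : 0 < l) (L : Finset (ℤ × ℤ)) :
    betaKL k l L ≤ 3 * (k * l) * (latBoundary L).card := by
  set T := (L \ gridPart k l L).image (gridIndex k l)
  have hwit : ∀ i ∈ T, ∃ r ∈ gridRect k l i, r ∈ crossingSet L := by
    intro i hi
    obtain ⟨p, hp, rfl⟩ := Finset.mem_image.1 hi
    rw [Finset.mem_sdiff, mem_gridPart_iff hk hl, not_and] at hp
    obtain ⟨q, hq, hqL⟩ := Finset.not_subset.1 (hp.2 hp.1)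
    exact exists_mem_crossingSet (mem_gridRect_gridIndex hk hl p) hp.1 hq hqL
  choose! w hwR hwC using hwit
  have hT : T.card ≤ (crossingSet L).card := by
    refine Finset.card_le_card_of_injOn w (fun i hi => hwC i hi) fun i hi j hj hij => ?_
    rw [← (mem_gridRect_iff hk hl).1 (hwR i hi), ← (mem_gridRect_iff hk hl).1 (hwR j hj), hij]
  calc betaKL k l L ≤ (T.biUnion (gridRect k l)).card :=
        Finset.card_le_card fun p hp =>
          Finset.mem_biUnion.2 ⟨_, Finset.mem_image_of_mem _ hp, mem_gridRect_gridIndex hk hl p⟩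
    _ ≤ T.card * (k * l) :=
        Finset.card_biUnion_le_card_mul _ _ _ fun i _ => (card_gridRect k l i).le
    _ ≤ 3 * (latBoundary L).card * (k * l) :=
        Nat.mul_le_mul_right _ (hT.trans (card_crossingSet_le L))
    _ = 3 * (k * l) * (latBoundary L).card := by ring

end Boundary

section Gluing

variable {A : Type*} {U : Set ((ℤ × ℤ) → A)} {M : ℕ}

lemma le_euclDist_of_le_sub_fst {p q : ℤ × ℤ} (h : (M : ℤ) ≤ q.1 - p.1) :
    (M : ℝ) ≤ euclDist p q := by
  refine le_trans ?_ (Real.abs_le_sqrt (le_add_of_nonneg_right (sq_nonneg _)))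
  rw [← Int.cast_abs, abs_sub_comm]
  exact_mod_cast h.trans (le_abs_self _)

lemma le_euclDist_of_le_sub_snd {p q : ℤ × ℤ} (h : (M : ℤ) ≤ q.2 - p.2) :
    (M : ℝ) ≤ euclDist p q := by
  refine le_trans ?_ (Real.abs_le_sqrt (le_add_of_nonneg_left (sq_nonneg _)))
  rw [← Int.cast_abs, abs_sub_comm]
  exact_mod_cast h.trans (le_abs_self _)

lemma BlockGluingWithGap.exists_eqOn_of_chain (hbg : BlockGluingWithGap U M)
    (R H : ℕ → Finset (ℤ × ℤ)) (hR : ∀ j, ∃ m n c, R j = Zrect m n c)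
    (hH : ∀ j, ∃ m n c, H j = Zrect m n c) (hcov : ∀ i j, i ≤ j → R i ⊆ H j)
    (hsep : ∀ j, ∀ p ∈ H j, ∀ q ∈ R (j + 1), (M : ℝ) ≤ euclDist p q)
    (y : ℕ → (ℤ × ℤ) → A) (hy : ∀ j, y j ∈ U) (n : ℕ) :
    ∃ x ∈ U, ∀ j ≤ n, ∀ p ∈ R j, x p = y j p := by
  induction n with
  | zero => exact ⟨y 0, hy 0, fun j hj _ _ => by rw [Nat.le_zero.1 hj]⟩
  | succ n ih =>
    obtain ⟨x, hx, hxy⟩ := ih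
    obtain ⟨m₁, n₁, c₁, hH⟩ := hH n
    obtain ⟨m₂, n₂, c₂, hR⟩ := hR (n + 1)
    obtain ⟨z, hz, hzx, hzy⟩ :=
      hbg m₁ n₁ m₂ n₂ c₁ c₂ (by rw [← hH, ← hR]; exact hsep n) x hx (y (n + 1)) (hy _)
    refine ⟨z, hz, fun j hj p hp => ?_⟩
    rcases Nat.lt_or_eq_of_le hj with hj | rfl
    · rw [hzx p (hH ▸ hcov j n (by omega) hp), hxy j (by omega) p hp]
    · exact hzy p (hR ▸ hp)

lemma BlockGluingWithGap.exists_eqOn_row (hbg : BlockGluingWithGap U M) (k l : ℕ)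
    (c : ℤ × ℤ) (y : ℕ → (ℤ × ℤ) → A) (hy : ∀ j, y j ∈ U) (n : ℕ) :
    ∃ x ∈ U, ∀ j ≤ n, ∀ p ∈ Zrect k l (c.1 + ((k + M) * j : ℕ), c.2), x p = y j p := by
  refine hbg.exists_eqOn_of_chain _ (fun j => Zrect ((k + M) * j + k) l c)
    (fun _ => ⟨_, _, _, rfl⟩) (fun _ => ⟨_, _, _, rfl⟩) (fun i j hij p hp => ?_)
    (fun j p hp q hq => le_euclDist_of_le_sub_fst ?_) y hy n
  · have := Nat.mul_le_mul_left (k + M) hij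
    rw [mem_Zrect] at hp ⊢
    omega
  · have : (k + M) * (j + 1) = (k + M) * j + k + M := by ring
    rw [mem_Zrect] at hp hq
    omega

lemma BlockGluingWithGap.exists_eqOn_column (hbg : BlockGluingWithGap U M) (k l : ℕ)
    (c : ℤ × ℤ) (y : ℕ → (ℤ × ℤ) → A) (hy : ∀ j, y j ∈ U) (n : ℕ) :
    ∃ x ∈ U, ∀ j ≤ n, ∀ p ∈ Zrect k l (c.1, c.2 + ((l + M) * j : ℕ)), x p = y j p := by
  refine hbg.exists_eqOn_of_chain _ (fun j => Zrect k ((l + M) * j + l) c)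
    (fun _ => ⟨_, _, _, rfl⟩) (fun _ => ⟨_, _, _, rfl⟩) (fun i j hij p hp => ?_)
    (fun j p hp q hq => le_euclDist_of_le_sub_snd ?_) y hy n
  · have := Nat.mul_le_mul_left (l + M) hij
    rw [mem_Zrect] at hp ⊢
    omega
  · have : (l + M) * (j + 1) = (l + M) * j + l + M := by ring
    rw [mem_Zrect] at hp hq
    omega

lemma BlockGluingWithGap.exists_eqOn_grid (hbg : BlockGluingWithGap U M) (k l : ℕ)
    (c : ℤ × ℤ) (y : ℕ → ℕ → (ℤ × ℤ) → A) (hy : ∀ a b, y a b ∈ U) (m n : ℕ) :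
    ∃ x ∈ U, ∀ a ≤ m, ∀ b ≤ n,
      ∀ p ∈ Zrect k l (c.1 + ((k + M) * a : ℕ), c.2 + ((l + M) * b : ℕ)), x p = y a b p := by
  choose xrow hxrow hxrow_eq using fun b : ℕ =>
    hbg.exists_eqOn_row k l (c.1, c.2 + ((l + M) * b : ℕ)) (fun a => y a b) (fun a => hy a b) m
  obtain ⟨x, hx, hx_eq⟩ := hbg.exists_eqOn_column ((k + M) * m + k) l c xrow hxrow n
  refine ⟨x, hx, fun a ha b hb p hp => ?_⟩
  rw [← hxrow_eq b a ha p hp]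
  refine hx_eq b hb p ?_
  have := Nat.mul_le_mul_left (k + M) ha
  rw [mem_Zrect] at hp ⊢
  omega

lemma BlockGluingWithGap.exists_eqOn_gridRect (hbg : BlockGluingWithGap U M) (k l : ℕ)
    (S : Finset (ℤ × ℤ)) (y : ℤ × ℤ → (ℤ × ℤ) → A) (hy : ∀ i, y i ∈ U) :
    ∃ x ∈ U, ∀ i ∈ S, ∀ p ∈ Zrect k l (((k + M : ℕ) : ℤ) * i.1, ((l + M : ℕ) : ℤ) * i.2),
      x p = y i p := by
  obtain ⟨u, hu⟩ := S.bddAbove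
  obtain ⟨v, hv⟩ := S.bddBelow
  obtain ⟨x, hx, hx_eq⟩ := hbg.exists_eqOn_grid k l
    (((k + M : ℕ) : ℤ) * v.1, ((l + M : ℕ) : ℤ) * v.2)
    (fun a b => y (v.1 + a, v.2 + b)) (fun _ _ => hy _) (u.1 - v.1).toNat (u.2 - v.2).toNat
  refine ⟨x, hx, fun i hi p hp => ?_⟩
  have hvi := hv hi
  have hiu := hu hi
  rw [Prod.le_def] at hvi hiu
  have hi' : (v.1 + (i.1 - v.1).toNat, v.2 + (i.2 - v.2).toNat) = i := by
    ext <;> dsimp only <;> omega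
  rw [← hi']
  refine hx_eq _ (by omega) _ (by omega) p ?_
  convert hp using 2
  ext <;> push_cast <;> rw [Int.toNat_of_nonneg (by omega)] <;> ring

end Gluing

section Counting

variable {A : Type*} [Fintype A] {U : Set ((ℤ × ℤ) → A)} {k l : ℕ}

lemma prod_patternCount_le_patternCount_biUnion {ι : Type*} [DecidableEq ι] (s : Finset ι)
    (F : ι → Finset (ℤ × ℤ)) (hne : U.Nonempty)
    (hglue : ∀ y : ι → (ℤ × ℤ) → A, (∀ i, y i ∈ U) → ∃ x ∈ U, ∀ i ∈ s, ∀ p ∈ F i, x p = y i p) :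
    ∏ i ∈ s, patternCount U (F i) ≤ patternCount U (s.biUnion F) := by
  induction s using Finset.induction with
  | empty => simpa [Nat.one_le_iff_ne_zero] using (patternCount_pos U hne ∅).ne'
  | insert a s ha ih =>
    rw [Finset.prod_insert ha, Finset.biUnion_insert]
    refine (Nat.mul_le_mul_left _ (ih fun y hy => ?_)).trans (mul_patternCount_le_union U ?_)
    · obtain ⟨x, hx, hxy⟩ := hglue y hy
      exact ⟨x, hx, fun i hi => hxy i (Finset.mem_insert_of_mem hi)⟩
    · intro x hx x' hx'
      obtain ⟨z, hz, hzy⟩ := hglue (fun i => if i = a then x else x')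
        (fun i => by split_ifs <;> assumption)
      refine ⟨z, hz, fun p hp => ?_, fun p hp => ?_⟩
      · simpa using hzy a (Finset.mem_insert_self a s) p hp
      · obtain ⟨i, hi, hpi⟩ := Finset.mem_biUnion.1 hp
        have hia : i ≠ a := fun h => ha (h ▸ hi)
        simpa [hia] using hzy i (Finset.mem_insert_of_mem hi) p hpi

lemma patternCount_le_pow_alphaKL_mul_pow_betaKL
    (hU : IsTranslationInvariant U) (hk : 0 < k) (hl : 0 < l)
    (L : Finset (ℤ × ℤ)) :
    patternCount U L ≤
      patternCount U (Zrect k l (0, 0)) ^ alphaKL k l L * Fintype.card A ^ betaKL k l L := by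
  calc patternCount U L = patternCount U (gridPart k l L ∪ L \ gridPart k l L) := by
        rw [Finset.union_sdiff_of_subset gridPart_subset]
    _ ≤ patternCount U (gridPart k l L) * patternCount U (L \ gridPart k l L) :=
        patternCount_union_le U _ _
    _ ≤ _ := Nat.mul_le_mul ?_ (patternCount_le_card_pow U _)
  rw [gridPart_eq_biUnion hk hl, alphaKL_eq_card_fullCells hk hl, ← Finset.prod_const]
  exact (patternCount_biUnion_le U _ _).trans
    (Finset.prod_le_prod' fun i _ => (patternCount_Zrect hU k l _).le)

lemma pow_alphaKL_le_patternCount (hU : IsTranslationInvariant U)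
    (hne : U.Nonempty) {M : ℕ} (hbg : BlockGluingWithGap U M) (hk : 0 < k) (hl : 0 < l)
    (L : Finset (ℤ × ℤ)) :
    patternCount U (Zrect k l (0, 0)) ^ alphaKL (k + M) (l + M) L ≤ patternCount U L := by
  set inner : ℤ × ℤ → Finset (ℤ × ℤ) := fun i =>
    Zrect k l (((k + M : ℕ) : ℤ) * i.1, ((l + M : ℕ) : ℤ) * i.2)
  have hinner : ∀ i ∈ fullCells (k + M) (l + M) L, inner i ⊆ L := by
    intro i hi p hp
    refine (mem_fullCells (by omega) (by omega)).1 hi ?_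
    rw [mem_Zrect] at hp
    rw [gridRect, mem_Zrect]
    push_cast at hp ⊢
    omega
  rw [alphaKL_eq_card_fullCells (by omega) (by omega), ← Finset.prod_const]
  calc ∏ _i ∈ fullCells (k + M) (l + M) L, patternCount U (Zrect k l (0, 0))
      = ∏ i ∈ fullCells (k + M) (l + M) L, patternCount U (inner i) :=
        Finset.prod_congr rfl fun i _ => (patternCount_Zrect hU k l _).symm
    _ ≤ patternCount U ((fullCells (k + M) (l + M) L).biUnion inner) :=
        prod_patternCount_le_patternCount_biUnion _ _ hne (hbg.exists_eqOn_gridRect k l _)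
    _ ≤ patternCount U L :=
        patternCount_mono U (Finset.biUnion_subset.2 hinner)

end Counting

section Entropy

variable {A : Type*} {U : Set ((ℤ × ℤ) → A)}

noncomputable def boundaryRatio (L : Finset (ℤ × ℤ)) : ℝ := (latBoundary L).card / L.card

lemma boundaryRatio_nonneg (L : Finset (ℤ × ℤ)) : 0 ≤ boundaryRatio L := by
  unfold boundaryRatio
  positivity

lemma boundaryRatio_le_one (L : Finset (ℤ × ℤ)) : boundaryRatio L ≤ 1 :=
  div_le_one_of_le₀ (by exact_mod_cast Finset.card_le_card Finset.sdiff_subset) (by positivity)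

noncomputable def patternEntropy (U : Set ((ℤ × ℤ) → A)) (L : Finset (ℤ × ℤ)) : ℝ :=
  (1 / (L.card : ℝ)) * Real.log (patternCount U L)

lemma patternEntropy_nonneg (L : Finset (ℤ × ℤ)) : 0 ≤ patternEntropy U L :=
  mul_nonneg (by positivity) (Real.log_natCast_nonneg _)

variable [Fintype A]

lemma patternEntropy_le_log_card (hne : U.Nonempty) (L : Finset (ℤ × ℤ)) :
    patternEntropy U L ≤ Real.log (Fintype.card A) := by
  rcases L.eq_empty_or_nonempty with rfl | hL
  · simpa [patternEntropy] using Real.log_natCast_nonneg _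
  rw [patternEntropy, one_div, inv_mul_le_iff₀ (by simpa using hL.card_pos), ← Real.log_pow]
  exact Real.log_le_log (by exact_mod_cast patternCount_pos U hne L)
    (by exact_mod_cast patternCount_le_card_pow U L)

variable {k l : ℕ} {L : Finset (ℤ × ℤ)}

lemma patternEntropy_le (hU : IsTranslationInvariant U)
    (hne : U.Nonempty) (hk : 0 < k) (hl : 0 < l) (hL : L.Nonempty) :
    patternEntropy U L ≤
      (1 / ((k * l : ℕ) : ℝ)) * Real.log (patternCount U (Zrect k l (0, 0))) +
        3 * (k * l) * Real.log (Fintype.card A) * boundaryRatio L := by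
  set γ := Real.log (patternCount U (Zrect k l (0, 0)))
  set ν := Real.log (Fintype.card A)
  have hcount : Real.log (patternCount U L) ≤ alphaKL k l L * γ + betaKL k l L * ν := by
    have hΓ : (0 : ℝ) < patternCount U (Zrect k l (0, 0)) := by
      exact_mod_cast patternCount_pos U hne _
    have hN : (0 : ℝ) < Fintype.card A := by
      obtain ⟨x, -⟩ := hne
      exact_mod_cast Fintype.card_pos_iff.2 ⟨x (0, 0)⟩
    rw [← Real.log_pow, ← Real.log_pow, ← Real.log_mul (pow_pos hΓ _).ne' (pow_pos hN _).ne']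
    exact Real.log_le_log (by exact_mod_cast patternCount_pos U hne L)
      (by exact_mod_cast patternCount_le_pow_alphaKL_mul_pow_betaKL hU hk hl L)
  have hcard : (L.card : ℝ) = alphaKL k l L * ((k * l : ℕ) : ℝ) + betaKL k l L := by
    exact_mod_cast card_eq_alphaKL_mul_add_betaKL hk hl
  have hβ : (betaKL k l L : ℝ) ≤ 3 * (k * l) * (latBoundary L).card := by
    exact_mod_cast betaKL_le hk hl L
  have hc : (0 : ℝ) < L.card := by exact_mod_cast hL.card_pos
  have hkl : (0 : ℝ) < ((k * l : ℕ) : ℝ) := by positivity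
  rw [patternEntropy, one_div, inv_mul_le_iff₀ hc]
  calc Real.log (patternCount U L) ≤ alphaKL k l L * γ + betaKL k l L * ν := hcount
    _ ≤ L.card / ((k * l : ℕ) : ℝ) * γ + 3 * (k * l) * (latBoundary L).card * ν := by
      have hα : (alphaKL k l L : ℝ) ≤ L.card / ((k * l : ℕ) : ℝ) := by
        rw [le_div_iff₀ hkl, hcard]
        linarith
      gcongr
    _ = _ := by
      unfold boundaryRatio
      field_simp

lemma le_patternEntropy (hU : IsTranslationInvariant U)
    (hne : U.Nonempty) {M : ℕ} (hbg : BlockGluingWithGap U M) (hk : 0 < k) (hl : 0 < l)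
    (hL : L.Nonempty) :
    (1 / (((k + M) * (l + M) : ℕ) : ℝ) - 3 * boundaryRatio L) *
        Real.log (patternCount U (Zrect k l (0, 0))) ≤ patternEntropy U L := by
  set γ := Real.log (patternCount U (Zrect k l (0, 0)))
  have hγ : 0 ≤ γ := Real.log_natCast_nonneg _
  have hcount : alphaKL (k + M) (l + M) L * γ ≤ Real.log (patternCount U L) := by
    rw [← Real.log_pow]
    exact Real.log_le_log (pow_pos (by exact_mod_cast patternCount_pos U hne _) _)
      (by exact_mod_cast pow_alphaKL_le_patternCount hU hne hbg hk hl L)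
  have hcard : (L.card : ℝ) =
      alphaKL (k + M) (l + M) L * (((k + M) * (l + M) : ℕ) : ℝ) + betaKL (k + M) (l + M) L := by
    exact_mod_cast card_eq_alphaKL_mul_add_betaKL (by omega) (by omega)
  have hβ : (betaKL (k + M) (l + M) L : ℝ) ≤
      3 * (((k + M) * (l + M) : ℕ) : ℝ) * (latBoundary L).card := by
    exact_mod_cast betaKL_le (k := k + M) (l := l + M) (by omega) (by omega) L
  have hc : (0 : ℝ) < L.card := by exact_mod_cast hL.card_pos
  have hKL : (0 : ℝ) < (((k + M) * (l + M) : ℕ) : ℝ) := by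
    have : 0 < (k + M) * (l + M) := Nat.mul_pos (by omega) (by omega)
    exact_mod_cast this
  rw [patternEntropy, one_div (L.card : ℝ), le_inv_mul_iff₀ hc]
  calc L.card * ((1 / (((k + M) * (l + M) : ℕ) : ℝ) - 3 * boundaryRatio L) * γ)
      = (L.card / (((k + M) * (l + M) : ℕ) : ℝ) - 3 * (latBoundary L).card) * γ := by
        unfold boundaryRatio
        field_simp
    _ ≤ alphaKL (k + M) (l + M) L * γ := by
        gcongr
        rw [sub_le_iff_le_add, div_le_iff₀ hKL, hcard]
        nlinarith
    _ ≤ Real.log (patternCount U L) := hcount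

end Entropy

section Limits

open Topology

lemma IsExpandingSystem.eventually_nonempty {Ω : ℕ → Finset (ℤ × ℤ)} (hΩ : IsExpandingSystem Ω) :
    ∀ᶠ n in atTop, (Ω n).Nonempty := by
  refine eventually_atTop.2 ⟨1, fun n hn => ?_⟩
  obtain ⟨m, rfl⟩ := Nat.exists_eq_add_of_le' hn
  obtain ⟨p, hp, -⟩ := Finset.exists_of_ssubset (hΩ.1 m)
  exact ⟨p, hp⟩

lemma tendsto_boundaryRatio {Ω : ℕ → Finset (ℤ × ℤ)}
    (hbd : limsup (fun n => boundaryRatio (Ω n)) atTop = 0) :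
    Tendsto (fun n => boundaryRatio (Ω n)) atTop (𝓝 0) := by
  have hle : ∀ n, boundaryRatio (Ω n) ≤ 1 := fun n => boundaryRatio_le_one _
  refine tendsto_of_le_liminf_of_limsup_le ?_ hbd.le (isBoundedUnder_of ⟨1, hle⟩)
    (isBoundedUnder_of ⟨0, fun n => boundaryRatio_nonneg _⟩)
  exact le_liminf_of_le (isBoundedUnder_of ⟨1, hle⟩).isCoboundedUnder_ge
    (Eventually.of_forall fun n => boundaryRatio_nonneg _)

variable {A : Type*} [Fintype A] {U : Set ((ℤ × ℤ) → A)} {Ω : ℕ → Finset (ℤ × ℤ)}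

lemma entropyAlong_le (hU : IsTranslationInvariant U)
    (hne : U.Nonempty) (hΩ : ∀ᶠ n in atTop, (Ω n).Nonempty)
    (hbd : Tendsto (fun n => boundaryRatio (Ω n)) atTop (𝓝 0))
    {k l : ℕ} (hk : 0 < k) (hl : 0 < l) :
    entropyAlong U Ω ≤ (1 / ((k * l : ℕ) : ℝ)) * Real.log (patternCount U (Zrect k l (0, 0))) := by
  set t := (1 / ((k * l : ℕ) : ℝ)) * Real.log (patternCount U (Zrect k l (0, 0)))
  have hlim : Tendsto (fun n => t + 3 * (k * l) * Real.log (Fintype.card A) *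
      boundaryRatio (Ω n)) atTop (𝓝 t) := by
    simpa using tendsto_const_nhds.add (hbd.const_mul (3 * (k * l) * Real.log (Fintype.card A)))
  rw [entropyAlong, ← hlim.limsup_eq]
  exact limsup_le_limsup (hΩ.mono fun n hn => patternEntropy_le hU hne hk hl hn)
    (isCoboundedUnder_le_of_le atTop fun n => patternEntropy_nonneg _) hlim.isBoundedUnder_le

lemma le_entropyAlong (hU : IsTranslationInvariant U)
    (hne : U.Nonempty) {M : ℕ} (hbg : BlockGluingWithGap U M)
    (hΩ : ∀ᶠ n in atTop, (Ω n).Nonempty)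
    (hbd : Tendsto (fun n => boundaryRatio (Ω n)) atTop (𝓝 0))
    {k l : ℕ} (hk : 0 < k) (hl : 0 < l) :
    (1 / (((k + M) * (l + M) : ℕ) : ℝ)) * Real.log (patternCount U (Zrect k l (0, 0))) ≤
      entropyAlong U Ω := by
  have hlim : Tendsto (fun n => (1 / (((k + M) * (l + M) : ℕ) : ℝ) -
      3 * boundaryRatio (Ω n)) *
        Real.log (patternCount U (Zrect k l (0, 0)))) atTop
      (𝓝 ((1 / (((k + M) * (l + M) : ℕ) : ℝ)) * Real.log (patternCount U (Zrect k l (0, 0))))) := by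
    simpa using ((tendsto_const_nhds.sub (hbd.const_mul 3)).mul_const _)
  rw [entropyAlong, ← hlim.limsup_eq]
  exact limsup_le_limsup (hΩ.mono fun n hn => le_patternEntropy hU hne hbg hk hl hn)
    hlim.isCoboundedUnder_le
    (isBoundedUnder_of ⟨_, fun n => patternEntropy_le_log_card hne (Ω n)⟩)

lemma rectEntropy_le_entropyAlong (hU : IsTranslationInvariant U)
    (hne : U.Nonempty) {M : ℕ} (hbg : BlockGluingWithGap U M)
    (hΩ : ∀ᶠ n in atTop, (Ω n).Nonempty)
    (hbd : Tendsto (fun n => boundaryRatio (Ω n)) atTop (𝓝 0)) :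
    rectEntropy U ≤ entropyAlong U Ω := by
  have hbdd : BddBelow (Set.range fun mn : ℕ × ℕ =>
      (1 / (((mn.1 + 1) * (mn.2 + 1) : ℕ) : ℝ)) *
        Real.log (patternCount U (Zrect (mn.1 + 1) (mn.2 + 1) (0, 0)))) :=
    ⟨0, by rintro - ⟨mn, rfl⟩; exact mul_nonneg (by positivity) (Real.log_natCast_nonneg _)⟩
  have hratio : Tendsto (fun k : ℕ => ((k + 1 : ℕ) / ((k + 1 : ℕ) + M : ℝ)) ^ 2 * rectEntropy U)
      atTop (𝓝 (1 ^ 2 * rectEntropy U)) :=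
    (((tendsto_natCast_div_add_atTop (M : ℝ)).comp (tendsto_add_atTop_nat 1)).pow 2).mul_const _
  rw [one_pow, one_mul] at hratio
  refine le_of_tendsto' hratio fun k => ?_
  have hk : (0 : ℝ) < (k + 1 : ℕ) := by positivity
  calc ((k + 1 : ℕ) / ((k + 1 : ℕ) + M : ℝ)) ^ 2 * rectEntropy U
      ≤ ((k + 1 : ℕ) / ((k + 1 : ℕ) + M : ℝ)) ^ 2 *
          ((1 / (((k + 1) * (k + 1) : ℕ) : ℝ)) *
            Real.log (patternCount U (Zrect (k + 1) (k + 1) (0, 0)))) := by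
        gcongr
        exact ciInf_le hbdd (k, k)
    _ = (1 / (((k + 1 + M) * (k + 1 + M) : ℕ) : ℝ)) *
          Real.log (patternCount U (Zrect (k + 1) (k + 1) (0, 0))) := by
        push_cast
        field_simp
    _ ≤ entropyAlong U Ω := le_entropyAlong hU hne hbg hΩ hbd k.succ_pos k.succ_pos

lemma entropyAlong_le_rectEntropy (hU : IsTranslationInvariant U)
    (hne : U.Nonempty) (hΩ : ∀ᶠ n in atTop, (Ω n).Nonempty)
    (hbd : Tendsto (fun n => boundaryRatio (Ω n)) atTop (𝓝 0)) :
    entropyAlong U Ω ≤ rectEntropy U :=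
  le_ciInf fun mn => entropyAlong_le hU hne hΩ hbd mn.1.succ_pos mn.2.succ_pos

end Limits

theorem entropyAlong_eq_rectEntropy_of_blockGluing_general {A : Type*} [Fintype A] [TopologicalSpace A]
    (U : Set ((ℤ × ℤ) → A)) (hU : IsShiftSpace U) (hbg : IsBlockGluing U)
    (Ω : ℕ → Finset (ℤ × ℤ)) (hΩ : IsExpandingSystem Ω)
    (hbd : Filter.limsup
      (fun n => ((latBoundary (Ω n)).card : ℝ) / ((Ω n).card : ℝ)) Filter.atTop = 0) :
    entropyAlong U Ω = rectEntropy U := by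
  obtain ⟨hne, -, hshift⟩ := hU
  obtain ⟨M, -, hgap⟩ := hbg
  have hΩne := hΩ.eventually_nonempty
  have hratio := tendsto_boundaryRatio hbd
  exact le_antisymm (entropyAlong_le_rectEntropy hshift hne hΩne hratio)
    (rectEntropy_le_entropyAlong hshift hne hgap hΩne hratio)

/-- Theorem 1.2 / 3.3: for a block gluing shift space,
`limsup |∂Ω(n)|/|Ω(n)| = 0` implies `h_Ω(U) = h_r(U)`. -/
theorem entropyAlong_eq_rectEntropy_of_blockGluing {A : Type*} [Fintype A] [TopologicalSpace A]
    [DiscreteTopology A] (hcard : 2 ≤ Fintype.card A)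
    (U : Set ((ℤ × ℤ) → A)) (hU : IsShiftSpace U) (hbg : IsBlockGluing U)
    (Ω : ℕ → Finset (ℤ × ℤ)) (hΩ : IsExpandingSystem Ω)
    (hbd : Filter.limsup
      (fun n => ((latBoundary (Ω n)).card : ℝ) / ((Ω n).card : ℝ)) Filter.atTop = 0) :
    entropyAlong U Ω = rectEntropy U :=
  entropyAlong_eq_rectEntropy_of_blockGluing_general U hU hbg Ω hΩ hbd
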